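/- Let N be an Orlicz function and let f be a measurable function on (0,1) such that M(t) := ∫₀¹ N(t·|f(s)|) ds is finite for every t > 0. Then for every finitely supported real sequence a = (a_k): the Luxemburg norm of ∑_k a_k f̄_k in the Orlicz space L_N(0,∞), namely inf{u > 0 : ∫₀^∞ N(|∑_k a_k f̄_k(s)|/u) ds ≤ 1}, equals ‖a‖_{l_M} = inf{ρ > 0 : ∑_k M(|a_k|/ρ) ≤ 1}. -/
import Mathlib


open MeasureTheory Set

noncomputable section

/-- An Orlicz function: increasing, convex on `[0,∞)` with `N 0 = 0`. -/
def IsOrliczFunction (N : ℝ → ℝ) : Prop :=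
  MonotoneOn N (Ici 0) ∧ ConvexOn ℝ (Ici 0) N ∧ N 0 = 0

/-- The disjoint translate `f̄ₖ` of a function on `(0,1)`, supported on `[k, k+1)`. -/
def disjTransl (f : ℝ → ℝ) (k : ℕ) (t : ℝ) : ℝ :=
  if t ∈ Ico (k : ℝ) ((k : ℝ) + 1) then f (t - k) else 0

lemma disjTransl_step {g : ℝ → ℝ} (hg : IntegrableOn g (Ioo (0:ℝ) 1)) (k : ℕ) :
    Integrable ((Ico (k:ℝ) ((k:ℝ)+1)).indicator fun t => g (t - k)) (volume.restrict (Ioi 0)) ∧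
    (∫ s in Ioi (0:ℝ), (Ico (k:ℝ) ((k:ℝ)+1)).indicator (fun t => g (t - k)) s)
      = ∫ s in Ioo (0:ℝ) 1, g s := by
  have hfun : ((Ioo (k:ℝ) ((k:ℝ)+1)).indicator fun t => g (t - k))
      = fun s => (Ioo (0:ℝ) 1).indicator g (s - k) := by
    funext s
    have hmem : s ∈ Ioo (k:ℝ) ((k:ℝ)+1) ↔ s - (k:ℝ) ∈ Ioo (0:ℝ) 1 := by
      simp only [mem_Ioo, sub_pos, sub_lt_iff_lt_add]
      constructor
      · rintro ⟨h1, h2⟩; exact ⟨h1, by linarith⟩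
      · rintro ⟨h1, h2⟩; exact ⟨h1, by linarith⟩
    by_cases h : s ∈ Ioo (k:ℝ) ((k:ℝ)+1)
    · rw [indicator_of_mem h, indicator_of_mem (hmem.1 h)]
    · rw [indicator_of_notMem h, indicator_of_notMem (fun hc => h (hmem.2 hc))]
  have hI : Integrable ((Ioo (0:ℝ) 1).indicator g) volume :=
    (integrable_indicator_iff measurableSet_Ioo).2 hg
  have h0 : Integrable (fun s => (Ioo (0:ℝ) 1).indicator g (s - (k:ℝ))) volume :=
    hI.comp_sub_right (k:ℝ)
  have h1 : Integrable ((Ioo (k:ℝ) ((k:ℝ)+1)).indicator fun t => g (t - k)) volume := by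
    rw [hfun]; exact h0
  have hae : ((Ioo (k:ℝ) ((k:ℝ)+1)).indicator fun t => g (t - k))
      =ᵐ[volume] ((Ico (k:ℝ) ((k:ℝ)+1)).indicator fun t => g (t - k)) :=
    indicator_ae_eq_of_ae_eq_set Ioo_ae_eq_Ico
  have hICo : Integrable ((Ico (k:ℝ) ((k:ℝ)+1)).indicator fun t => g (t - k)) volume :=
    h1.congr hae
  refine ⟨hICo.restrict, ?_⟩
  have hsub : Ioo (k:ℝ) ((k:ℝ)+1) ⊆ Ioi (0:ℝ) := fun x hx =>
    lt_of_le_of_lt (Nat.cast_nonneg k) hx.1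
  calc (∫ s in Ioi (0:ℝ), (Ico (k:ℝ) ((k:ℝ)+1)).indicator (fun t => g (t - k)) s)
      = ∫ s in Ioi (0:ℝ), (Ioo (k:ℝ) ((k:ℝ)+1)).indicator (fun t => g (t - k)) s :=
        (integral_congr_ae (ae_restrict_of_ae hae)).symm
    _ = ∫ s in Ioo (k:ℝ) ((k:ℝ)+1), (fun t => g (t - k)) s ∂(volume.restrict (Ioi 0)) :=
        integral_indicator measurableSet_Ioo
    _ = ∫ s in Ioo (k:ℝ) ((k:ℝ)+1), g (s - k) := by
        rw [Measure.restrict_restrict measurableSet_Ioo, inter_eq_left.2 hsub]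
    _ = ∫ s, (Ioo (k:ℝ) ((k:ℝ)+1)).indicator (fun t => g (t - k)) s :=
        (integral_indicator measurableSet_Ioo).symm
    _ = ∫ s, (Ioo (0:ℝ) 1).indicator g (s - (k:ℝ)) := by rw [hfun]
    _ = ∫ s, (Ioo (0:ℝ) 1).indicator g s := integral_sub_right_eq_self _ _
    _ = ∫ s in Ioo (0:ℝ) 1, g s := integral_indicator measurableSet_Ioo

/-- Let `N` be an Orlicz function and `f` measurable on `(0,1)` with
`M(t) = ∫₀¹ N(t|f(s)|) ds` finite for all `t > 0`. Then for every finitely supported `a`,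
the Luxemburg norm of `∑ aₖ f̄ₖ` in the Orlicz space `L_N(0,∞)` equals `‖a‖_{l_M}`. -/
theorem luxemburg_norm_of_disjoint_translates
    (N : ℝ → ℝ) (hN : IsOrliczFunction N)
    (f : ℝ → ℝ) (hf : Measurable f)
    (hfin : ∀ t : ℝ, 0 < t → IntegrableOn (fun s => N (t * |f s|)) (Ioo (0:ℝ) 1)) :
    ∀ a : ℕ →₀ ℝ,
      sInf {u : ℝ | 0 < u ∧
          (∫ s in Ioi (0:ℝ), N (|∑ k ∈ a.support, a k * disjTransl f k s| / u)) ≤ 1} =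
        sInf {ρ : ℝ | 0 < ρ ∧
          ∑ k ∈ a.support, (∫ s in Ioo (0:ℝ) 1, N ((|a k| / ρ) * |f s|)) ≤ 1} := by
  intro a
  have key : ∀ u : ℝ, 0 < u →
      (∫ s in Ioi (0:ℝ), N (|∑ k ∈ a.support, a k * disjTransl f k s| / u))
        = ∑ k ∈ a.support, (∫ s in Ioo (0:ℝ) 1, N ((|a k| / u) * |f s|)) := by
    intro u hu
    have hjk : ∀ (s : ℝ) (j k : ℕ), j ≠ k → s ∈ Ico (k:ℝ) ((k:ℝ)+1) →
        s ∉ Ico (j:ℝ) ((j:ℝ)+1) := by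
      intro s j k hj hs hsj
      rcases lt_or_gt_of_ne hj with h' | h'
      · have hjk1 : (j:ℝ) + 1 ≤ k := by exact_mod_cast Nat.succ_le_of_lt h'
        have := hs.1; have := hsj.2; linarith
      · have hjk1 : (k:ℝ) + 1 ≤ j := by exact_mod_cast Nat.succ_le_of_lt h'
        have := hs.2; have := hsj.1; linarith
    have hpoint : ∀ s : ℝ, N (|∑ k ∈ a.support, a k * disjTransl f k s| / u)
        = ∑ k ∈ a.support,
            (Ico (k:ℝ) ((k:ℝ)+1)).indicator (fun t => N ((|a k| / u) * |f (t - k)|)) s := by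
      intro s
      by_cases h : ∃ k ∈ a.support, s ∈ Ico (k:ℝ) ((k:ℝ)+1)
      · obtain ⟨k, hk, hs⟩ := h
        have hL : ∑ j ∈ a.support, a j * disjTransl f j s = a k * f (s - k) := by
          rw [Finset.sum_eq_single_of_mem k hk]
          · rw [disjTransl, if_pos hs]
          · intro j _ hjne
            rw [disjTransl, if_neg (hjk s j k hjne hs), mul_zero]
        have hR : ∑ j ∈ a.support,
            (Ico (j:ℝ) ((j:ℝ)+1)).indicator (fun t => N ((|a j| / u) * |f (t - j)|)) s
              = N ((|a k| / u) * |f (s - k)|) := by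
          rw [Finset.sum_eq_single_of_mem k hk]
          · exact indicator_of_mem hs _
          · intro j _ hjne
            exact indicator_of_notMem (hjk s j k hjne hs) _
        rw [hL, hR, abs_mul, mul_div_right_comm]
      · push_neg at h
        have hL : ∑ j ∈ a.support, a j * disjTransl f j s = 0 :=
          Finset.sum_eq_zero fun j hj => by rw [disjTransl, if_neg (h j hj), mul_zero]
        have hR : ∑ j ∈ a.support,
            (Ico (j:ℝ) ((j:ℝ)+1)).indicator (fun t => N ((|a j| / u) * |f (t - j)|)) s = 0 :=
          Finset.sum_eq_zero fun j hj => indicator_of_notMem (h j hj) _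
        rw [hL, hR, abs_zero, zero_div, hN.2.2]
    have hint : ∀ k ∈ a.support,
        IntegrableOn (fun s => N ((|a k| / u) * |f s|)) (Ioo (0:ℝ) 1) := by
      intro k hk
      have hak : a k ≠ 0 := Finsupp.mem_support_iff.1 hk
      exact hfin _ (div_pos (abs_pos.2 hak) hu)
    calc (∫ s in Ioi (0:ℝ), N (|∑ k ∈ a.support, a k * disjTransl f k s| / u))
        = ∫ s in Ioi (0:ℝ), ∑ k ∈ a.support,
            (Ico (k:ℝ) ((k:ℝ)+1)).indicator (fun t => N ((|a k| / u) * |f (t - k)|)) s := by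
          simp only [hpoint]
      _ = ∑ k ∈ a.support, ∫ s in Ioi (0:ℝ),
            (Ico (k:ℝ) ((k:ℝ)+1)).indicator (fun t => N ((|a k| / u) * |f (t - k)|)) s :=
          integral_finset_sum _ fun k hk => (disjTransl_step (hint k hk) k).1
      _ = ∑ k ∈ a.support, (∫ s in Ioo (0:ℝ) 1, N ((|a k| / u) * |f s|)) :=
          Finset.sum_congr rfl fun k hk => (disjTransl_step (hint k hk) k).2
  refine congrArg sInf (Set.ext fun u => ?_)
  simp only [mem_setOf_eq]
  exact and_congr_right fun hu => by rw [key u hu]
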